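/- arXiv:1610.02990 — 6 statements merged into one kernel-verified Lean document; each statement's English description precedes it below -/
import Mathlib

section
/- Let G be a finite p-group and V a finite-dimensional representation of G over ℚ on which G acts nontrivially. Then dim V ≥ p − 1. -/
open Polynomial

/-- Key linear algebra lemma: an endomorphism of order dividing `p` which is not the
identity forces the dimension to be at least `p - 1`. -/
lemma aux_dim (p : ℕ) (hp : p.Prime) (V : Type*) [AddCommGroup V] [Module ℚ V]
    [FiniteDimensional ℚ V] (f : V →ₗ[ℚ] V) (hfp : f ^ p = 1) (hf1 : f ≠ 1) :
    p - 1 ≤ Module.finrank ℚ V := by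
  haveI : Fact p.Prime := ⟨hp⟩
  have hint : IsIntegral ℚ f := LinearMap.isIntegral f
  have hmin : minpoly ℚ f ∣ cyclotomic p ℚ * (X - 1) := by
    rw [cyclotomic_prime_mul_X_sub_one ℚ p]
    apply minpoly.dvd
    simp [hfp, sub_eq_zero]
  by_cases h : cyclotomic p ℚ ∣ minpoly ℚ f
  case neg =>
    exfalso
    have hcop : IsCoprime (cyclotomic p ℚ) (minpoly ℚ f) :=
      (cyclotomic.irreducible_rat hp.pos).coprime_iff_not_dvd.mpr h
    have hdvd1 : minpoly ℚ f ∣ X - 1 := by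
      rw [mul_comm] at hmin
      exact (hcop.symm.dvd_of_dvd_mul_right hmin)
    obtain ⟨c, hc⟩ := hdvd1
    have : aeval f (X - 1 : ℚ[X]) = 0 := by
      rw [hc, map_mul, minpoly.aeval, zero_mul]
    simp only [map_sub, aeval_X, map_one, sub_eq_zero] at this
    exact hf1 this
  have hdeg : p - 1 ≤ (minpoly ℚ f).natDegree := by
    have := natDegree_le_of_dvd h (minpoly.ne_zero hint)
    rwa [natDegree_cyclotomic, Nat.totient_prime hp] at this
  have h2 : (minpoly ℚ f).natDegree ≤ f.charpoly.natDegree :=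
    natDegree_le_of_dvd (LinearMap.minpoly_dvd_charpoly f) f.charpoly_monic.ne_zero
  rw [LinearMap.charpoly_natDegree] at h2
  omega

/-- Let `G` be a finite `p`-group and `V` a finite-dimensional representation of `G` over `ℚ`
on which `G` acts nontrivially. Then `dim V ≥ p - 1`. -/
theorem stmt3 (p : ℕ) (hp : p.Prime) (G : Type*) [Group G] [Finite G] (hG : IsPGroup p G)
    (V : Type*) [AddCommGroup V] [Module ℚ V] [FiniteDimensional ℚ V]
    (ρ : Representation ℚ G V) (hnt : ¬ ∀ (g : G) (v : V), ρ g v = v) :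
    p - 1 ≤ Module.finrank ℚ V := by
  push_neg at hnt
  obtain ⟨g, v, hgv⟩ := hnt
  have hρg : ρ g ≠ 1 := by
    intro h; apply hgv; rw [h]; rfl
  obtain ⟨k, hk⟩ := hG g
  have hdvd : orderOf (ρ g) ∣ p ^ k :=
    dvd_trans (orderOf_map_dvd ρ g) (orderOf_dvd_of_pow_eq_one hk)
  obtain ⟨j, hj, hje⟩ := (Nat.dvd_prime_pow hp).mp hdvd
  have hj0 : j ≠ 0 := by
    rintro rfl
    simp at hje
    exact hρg hje
  set f := (ρ g) ^ (p ^ (j - 1)) with hf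
  have he : p ^ (j - 1) * p = p ^ j := by
    rw [← pow_succ, Nat.sub_add_cancel (Nat.one_le_iff_ne_zero.mpr hj0)]
  have hfp : f ^ p = 1 := by
    rw [hf, ← pow_mul, he, ← hje]
    exact pow_orderOf_eq_one _
  have hf1 : f ≠ 1 := by
    apply pow_ne_one_of_lt_orderOf (pow_ne_zero _ hp.pos.ne')
    rw [hje]
    exact Nat.pow_lt_pow_right hp.one_lt (Nat.sub_lt (Nat.pos_of_ne_zero hj0) one_pos)
  exact aux_dim p hp V f hfp hf1
end

section
/- Let G be a non-abelian finite p-group with p ≥ 3, and let V be a faithful finite-dimensional representation of G over ℚ. Then dim V ≥ 2p. -/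
/-!
Since `G` is a nonabelian `p`-group, the center of `G ⧸ Z(G)` is nontrivial, which yields
`a, b : G` whose commutator `z = ⁅a, b⁆` is central of order `p`. By faithfulness `ρ z ≠ 1`,
so `W = ker Φ_p(ρ z)` is a nonzero `G`-stable subspace, and the action of `ρ z` makes `W` a
vector space over `K = ℚ(ζ_p)`, on which `ρ a, ρ b` act `K`-linearly with
`ρ a ρ b = ζ_p • ρ b ρ a`. Taking determinants over `K` gives `ζ_p ^ dim_K W = 1`, so
`p ∣ dim_K W` and `dim_ℚ V ≥ dim_ℚ W = (p - 1) dim_K W ≥ (p - 1) p ≥ 2 p`.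
-/

open Polynomial Subgroup
open scoped commutatorElement

theorem commutatorElement_pow_right_of_mem_center {G : Type*} [Group G] {a b : G}
    (h : ⁅a, b⁆ ∈ center G) (k : ℕ) : ⁅a, b ^ k⁆ = ⁅a, b⁆ ^ k := by
  induction k with
  | zero => simp
  | succ k ih =>
    rw [pow_succ, commutatorElement_mul_right_eq_mul_conj, ih, mul_assoc _ (b ^ k),
      mem_center_iff.mp h (b ^ k), ← mul_assoc, mul_inv_cancel_right, pow_succ]

namespace IsPGroup

variable {p : ℕ} [Fact p.Prime] {G : Type*} [Group G] [Finite G]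

theorem exists_forall_commutatorElement_mem_center (hG : IsPGroup p G) (h : center G ≠ ⊤) :
    ∃ a : G, a ∉ center G ∧ ∀ b, ⁅a, b⁆ ∈ center G := by
  have : Nontrivial (G ⧸ center G) := QuotientGroup.nontrivial_iff.mpr h
  have := (hG.to_quotient (center G)).center_nontrivial
  obtain ⟨⟨q, hq⟩, hq1⟩ := exists_ne (1 : center (G ⧸ center G))
  obtain ⟨a, rfl⟩ := QuotientGroup.mk_surjective q
  refine ⟨a, fun ha => hq1 (Subtype.ext ((QuotientGroup.eq_one_iff a).mpr ha)), fun b => ?_⟩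
  rw [← QuotientGroup.eq_one_iff, ← QuotientGroup.mk'_apply, map_commutatorElement,
    commutatorElement_eq_one_iff_mul_comm]
  exact (mem_center_iff.mp hq _).symm

theorem exists_commutatorElement_mem_center_orderOf_eq (hG : IsPGroup p G)
    (h : center G ≠ ⊤) : ∃ a b : G, ⁅a, b⁆ ∈ center G ∧ orderOf ⁅a, b⁆ = p := by
  obtain ⟨a, ha, hcenter⟩ := hG.exists_forall_commutatorElement_mem_center h
  obtain ⟨b, hb⟩ : ∃ b : G, ⁅a, b⁆ ≠ 1 := by
    by_contra! hab
    exact ha (mem_center_iff.mpr fun b => (commutatorElement_eq_one_iff_mul_comm.mp (hab b)).symm)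
  obtain ⟨k, hk⟩ := IsPGroup.iff_orderOf.mp hG ⁅a, b⁆
  have hk0 : k ≠ 0 := by
    rintro rfl
    exact hb (orderOf_eq_one_iff.mp hk)
  refine ⟨a, b ^ (orderOf ⁅a, b⁆ / p), hcenter _, ?_⟩
  rw [commutatorElement_pow_right_of_mem_center (hcenter b)]
  exact orderOf_pow_orderOf_div (orderOf_pos _).ne' (hk ▸ dvd_pow_self p hk0)

end IsPGroup

theorem pow_finrank_eq_one_of_mul_eq_smul_mul {K W : Type*} [CommRing K] [AddCommGroup W]
    [Module K W] [Module.Free K W] [Module.Finite K W] {A B : Module.End K W}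
    (hA : IsUnit A) (hB : IsUnit B) {ζ : K} (h : A * B = ζ • (B * A)) :
    ζ ^ Module.finrank K W = 1 := by
  have hdet := congrArg LinearMap.det h
  rw [map_mul, LinearMap.det_smul, map_mul, mul_comm (LinearMap.det B)] at hdet
  exact ((LinearMap.isUnit_det A hA).mul (LinearMap.isUnit_det B hB)).mul_eq_right.mp hdet.symm

theorem finrank_mul_orderOf_dvd_finrank_of_mul_eq {F K W : Type*} [Field F] [Field K]
    [Algebra F K] [AddCommGroup W] [Module F W] [FiniteDimensional F W]
    (φ : K →ₐ[F] Module.End F W) {A B : Module.End F W} (hA : IsUnit A) (hB : IsUnit B)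
    (hAφ : ∀ k, Commute A (φ k)) (hBφ : ∀ k, Commute B (φ k)) {ζ : K}
    (hAB : A * B = φ ζ * (B * A)) :
    Module.finrank F K * orderOf ζ ∣ Module.finrank F W := by
  let _ : Module K W := Module.compHom W φ.toRingHom
  have : IsScalarTower F K W := ⟨fun c k w => by
    change φ (c • k) w = c • φ k w
    rw [map_smul, LinearMap.smul_apply]⟩
  have : FiniteDimensional K W := .right F K W
  let linear (T : Module.End F W) (hT : ∀ k, Commute T (φ k)) : Module.End K W :=
    { toFun := T
      map_add' := T.map_add
      map_smul' := fun k w => LinearMap.congr_fun (hT k) w }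
  have isUnit_linear (T : Module.End F W) (hT) (hu : IsUnit T) : IsUnit (linear T hT) :=
    (Module.End.isUnit_iff _).mpr ((Module.End.isUnit_iff T).mp hu)
  have hζ : ζ ^ Module.finrank K W = 1 :=
    pow_finrank_eq_one_of_mul_eq_smul_mul (isUnit_linear A hAφ hA) (isUnit_linear B hBφ hB)
      (LinearMap.ext fun w => LinearMap.congr_fun hAB w)
  rw [← Module.finrank_mul_finrank F K W]
  exact mul_dvd_mul_left _ (orderOf_dvd_of_pow_eq_one hζ)

theorem totient_mul_dvd_finrank_of_aeval_cyclotomic_eq_zero {W : Type*} [AddCommGroup W]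
    [Module ℚ W] [FiniteDimensional ℚ W] {n : ℕ} (hn : 0 < n) {Z A B : Module.End ℚ W}
    (hZ : aeval Z (cyclotomic n ℚ) = 0) (hA : IsUnit A) (hB : IsUnit B)
    (hAZ : Commute A Z) (hBZ : Commute B Z) (hAB : A * B = Z * (B * A)) :
    n.totient * n ∣ Module.finrank ℚ W := by
  have : Fact (Irreducible (cyclotomic n ℚ)) := ⟨cyclotomic.irreducible_rat hn⟩
  let φ : AdjoinRoot (cyclotomic n ℚ) →ₐ[ℚ] Module.End ℚ W :=
    Ideal.Quotient.liftₐ _ (aeval Z) fun q hq => by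
      obtain ⟨c, rfl⟩ := Ideal.mem_span_singleton.mp hq
      rw [map_mul, hZ, zero_mul]
  have hφ (T : Module.End ℚ W) (hT : Commute T Z) (k : AdjoinRoot (cyclotomic n ℚ)) :
      Commute T (φ k) := by
    induction k using AdjoinRoot.induction_on with
    | ih q =>
      exact Algebra.commute_of_mem_adjoin_singleton_of_commute
        (aeval_mem_adjoin_singleton ℚ Z) hT
  have hφroot : φ (AdjoinRoot.root _) = Z := aeval_X Z
  have hfinrank : Module.finrank ℚ (AdjoinRoot (cyclotomic n ℚ)) = n.totient := by
    rw [(AdjoinRoot.powerBasis (cyclotomic_ne_zero n ℚ)).finrank, AdjoinRoot.powerBasis_dim,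
      natDegree_cyclotomic]
  have horder : orderOf (AdjoinRoot.root (cyclotomic n ℚ)) = n := by
    refine ((isRoot_cyclotomic_iff_charZero hn).mp ?_).eq_orderOf.symm
    have h := (AdjoinRoot.aeval_eq (cyclotomic n ℚ)).trans AdjoinRoot.mk_self
    rwa [aeval_def, eval₂_eq_eval_map, map_cyclotomic] at h
  have := finrank_mul_orderOf_dvd_finrank_of_mul_eq φ hA hB (hφ A hAZ) (hφ B hBZ)
    (ζ := AdjoinRoot.root _) (by rwa [hφroot])
  rwa [hfinrank, horder] at this

theorem ker_aeval_cyclotomic_ne_bot {R M : Type*} [CommRing R] [AddCommGroup M] [Module R M]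
    {p : ℕ} [Fact p.Prime] {Z : Module.End R M} (hZ1 : Z ≠ 1) (hZp : Z ^ p = 1) :
    LinearMap.ker (aeval Z (cyclotomic p R)) ≠ ⊥ := by
  intro hker
  have h : aeval Z (cyclotomic p R) * (Z - 1) = 0 := by
    simpa [hZp] using congrArg (aeval Z) (cyclotomic_prime_mul_X_sub_one R p)
  exact hZ1 (sub_eq_zero.mp (LinearMap.ext fun x =>
    LinearMap.ker_eq_bot'.mp hker _ (LinearMap.congr_fun h x)))

theorem Module.End.aeval_restrict_apply {R M : Type*} [CommSemiring R] [AddCommMonoid M]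
    [Module R M] (f : Module.End R M) {p : Submodule R M} (hf : ∀ x ∈ p, f x ∈ p) (q : R[X])
    (x : p) : (aeval (f.restrict hf) q x : M) = aeval f q x := by
  induction q using Polynomial.induction_on' with
  | add q r hq hr => simp [hq, hr]
  | monomial n c => simp [Module.End.pow_restrict n hf, LinearMap.restrict_apply]

namespace Representation

section

variable {k G V : Type*} [CommRing k] [Group G] [AddCommGroup V] [Module k V]
  (ρ : Representation k G V) {z : G}

theorem le_comap_ker_aeval_of_mem_center (hz : z ∈ center G) (q : k[X]) (g : G) :
    LinearMap.ker (aeval (ρ z) q) ≤ (LinearMap.ker (aeval (ρ z) q)).comap (ρ g) := by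
  intro v hv
  have hcomm : Commute (ρ g) (aeval (ρ z) q) :=
    Algebra.commute_of_mem_adjoin_singleton_of_commute (aeval_mem_adjoin_singleton k _)
      ((show Commute g z from mem_center_iff.mp hz g).map ρ)
  rw [LinearMap.mem_ker] at hv
  rw [Submodule.mem_comap, LinearMap.mem_ker, ← Module.End.mul_apply, ← hcomm.eq,
    Module.End.mul_apply, hv, map_zero]

theorem aeval_subrepresentation_ker_aeval (hz : z ∈ center G) (q : k[X]) :
    aeval (ρ.subrepresentation _ (ρ.le_comap_ker_aeval_of_mem_center hz q) z) q = 0 := by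
  ext v
  simpa using (Module.End.aeval_restrict_apply _ _ q v).trans v.2

end

theorem totient_mul_dvd_finrank_of_aeval_cyclotomic_eq_zero {G W : Type*} [Group G]
    [AddCommGroup W] [Module ℚ W] [FiniteDimensional ℚ W] (σ : Representation ℚ G W)
    {a b : G} (hz : ⁅a, b⁆ ∈ center G) {n : ℕ} (hn : 0 < n)
    (h : aeval (σ ⁅a, b⁆) (cyclotomic n ℚ) = 0) :
    n.totient * n ∣ Module.finrank ℚ W := by
  have hcomm (g : G) : Commute (σ g) (σ ⁅a, b⁆) :=
    (show Commute g ⁅a, b⁆ from mem_center_iff.mp hz g).map σ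
  refine _root_.totient_mul_dvd_finrank_of_aeval_cyclotomic_eq_zero hn h
    ((Group.isUnit a).map σ) ((Group.isUnit b).map σ) (hcomm a) (hcomm b) ?_
  rw [← map_mul, ← map_mul, ← map_mul, commutatorElement_def]
  group

end Representation

/-- Let `G` be a non-abelian finite `p`-group with `p ≥ 3`, and `V` a faithful
finite-dimensional representation of `G` over `ℚ`. Then `dim V ≥ 2 * p`. -/
theorem stmt4 (p : ℕ) (hp : p.Prime) (hp3 : 3 ≤ p)
    (G : Type*) [Group G] [Finite G] (hG : IsPGroup p G)
    (hna : ¬ ∀ a b : G, a * b = b * a)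
    (V : Type*) [AddCommGroup V] [Module ℚ V] [FiniteDimensional ℚ V]
    (ρ : Representation ℚ G V) (hfaithful : Function.Injective ρ) :
    2 * p ≤ Module.finrank ℚ V := by
  have : Fact p.Prime := ⟨hp⟩
  obtain ⟨a, b, hz, hzp⟩ := hG.exists_commutatorElement_mem_center_orderOf_eq fun h =>
    hna fun a b => mem_center_iff.mp (h ▸ mem_top b) a
  have hρz : ρ ⁅a, b⁆ ≠ 1 := fun h =>
    hp.one_lt.ne' (hzp ▸ orderOf_eq_one_iff.mpr (hfaithful (h.trans (map_one ρ).symm)))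
  set W := LinearMap.ker (aeval (ρ ⁅a, b⁆) (cyclotomic p ℚ))
  have hW : W ≠ ⊥ := ker_aeval_cyclotomic_ne_bot hρz
    (by rw [← map_pow, ← hzp, pow_orderOf_eq_one, map_one])
  have : Nontrivial W := Submodule.nontrivial_iff_ne_bot.mpr hW
  have hdvd := (ρ.subrepresentation W (ρ.le_comap_ker_aeval_of_mem_center hz _)
    ).totient_mul_dvd_finrank_of_aeval_cyclotomic_eq_zero hz hp.pos
    (ρ.aeval_subrepresentation_ker_aeval hz _)
  rw [Nat.totient_prime hp] at hdvd
  calc 2 * p ≤ (p - 1) * p := Nat.mul_le_mul_right p (by omega)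
    _ ≤ Module.finrank ℚ W := Nat.le_of_dvd Module.finrank_pos hdvd
    _ ≤ Module.finrank ℚ V := Submodule.finrank_le W
end

section
/- Let G be a non-abelian finite p-group and V a complex representation of G on which the center of G acts faithfully. Then V contains an irreducible G-subrepresentation whose dimension is divisible by p. -/
/-!
The commutator subgroup of a non-abelian `p`-group is a nontrivial normal subgroup, so it contains
a central element `z ≠ 1`, and `ρ z ≠ 1` by faithfulness. Having `p`-power order, `ρ z` is
diagonalisable, so it has an eigenvalue `μ ≠ 1`, a `p`-power root of unity. Since `z` is central,
the `μ`-eigenspace of `ρ z` is `G`-invariant; let `W` be an irreducible subrepresentation inside it.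
The determinant of `W` is a character of `G`, hence trivial on `z ∈ [G, G]`, while `ρ z` acts on `W`
as the scalar `μ`. Thus `μ ^ dim W = 1`, which forces `p ∣ dim W`.
-/

open Module

theorem Nat.Prime.dvd_of_pow_eq_one {M : Type*} [Monoid M] {p k d : ℕ} (hp : p.Prime) {x : M}
    (hx : x ≠ 1) (hpk : x ^ p ^ k = 1) (hd : x ^ d = 1) : p ∣ d := by
  by_contra h
  exact hx ((pow_eq_one_iff_of_coprime ((hp.coprime_iff_not_dvd.mpr h).pow_left k)).mp ⟨hpk, hd⟩)

theorem IsPGroup.exists_mem_center_ne_one_of_normal {p : ℕ} [Fact p.Prime] {G : Type*} [Group G]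
    [Finite G] (hG : IsPGroup p G) {N : Subgroup G} [N.Normal] (hN : N ≠ ⊥) :
    ∃ z ∈ N, z ∈ Subgroup.center G ∧ z ≠ 1 := by
  have hNp : p ∣ Nat.card N := by
    have : Nontrivial N := N.nontrivial_iff_ne_bot.mpr hN
    obtain ⟨n, hn, hcard⟩ := (hG.to_subgroup N).nontrivial_iff_card.mp this
    exact hcard ▸ dvd_pow_self p hn.ne'
  have hfix : (1 : N) ∈ MulAction.fixedPoints (ConjAct G) N := fun g => by simp
  obtain ⟨z, hz, hz1⟩ :=
    (hG.of_equiv ConjAct.toConjAct).exists_fixed_point_of_prime_dvd_card_of_fixed_point N hNp hfix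
  refine ⟨z, z.2, Subgroup.mem_center_iff.mpr fun g => ?_, fun h => hz1 (Subtype.ext h.symm)⟩
  have := congrArg Subtype.val (hz (ConjAct.toConjAct g))
  rw [ConjAct.Subgroup.val_conj_smul, ConjAct.smul_def, ConjAct.ofConjAct_toConjAct] at this
  exact mul_inv_eq_iff_eq_mul.mp this

namespace Module.End

variable {K V : Type*} [Field K] [AddCommGroup V] [Module K V] {f : End K V} {n : ℕ}

theorem isSemisimple_of_pow_eq_one (hn : (n : K) ≠ 0) (hf : f ^ n = 1) : f.IsSemisimple := by
  have hsep : (Polynomial.X ^ n - Polynomial.C (1 : K)).Separable :=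
    Polynomial.separable_X_pow_sub_C_unit 1 (isUnit_iff_ne_zero.mpr hn)
  refine isSemisimple_of_squarefree_aeval_eq_zero hsep.squarefree ?_
  simp [hf]

theorem HasEigenvalue.pow_eq_one {μ : K} (hμ : f.HasEigenvalue μ) (hf : f ^ n = 1) :
    μ ^ n = 1 := by
  obtain ⟨v, hv⟩ := hμ.exists_hasEigenvector
  have h : (μ ^ n - 1) • v = 0 := by
    rw [sub_smul, one_smul, ← hv.pow_apply, hf, one_apply, sub_self]
  exact sub_eq_zero.mp ((smul_eq_zero.mp h).resolve_right hv.2)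

theorem exists_hasEigenvalue_ne_one_of_pow_eq_one [IsAlgClosed K] [FiniteDimensional K V]
    (hn : (n : K) ≠ 0) (hf : f ^ n = 1) (hf1 : f ≠ 1) : ∃ μ, μ ≠ 1 ∧ f.HasEigenvalue μ := by
  by_contra! h
  suffices f.eigenspace 1 = ⊤ from hf1 (LinearMap.ext fun v => by
    simpa using mem_eigenspace_iff.mp (this ▸ Submodule.mem_top : v ∈ f.eigenspace 1))
  rw [← (isSemisimple_of_pow_eq_one hn hf).iSup_eigenspace_eq_top]
  refine le_antisymm (le_iSup _ 1) (iSup_le fun μ => ?_)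
  rcases eq_or_ne μ 1 with rfl | hμ
  · exact le_rfl
  · simp [not_not.mp (hasEigenvalue_iff.not.mp (h μ hμ))]

end Module.End

namespace Representation

variable {k G V : Type*} [Field k] [Group G] [AddCommGroup V] [Module k V]
  (ρ : Representation k G V)

theorem apply_mem_eigenspace_of_mem_center {z : G} (hz : z ∈ Subgroup.center G) (μ : k) (g : G)
    {v : V} (hv : v ∈ End.eigenspace (ρ z) μ) : ρ g v ∈ End.eigenspace (ρ z) μ := by
  rw [End.mem_eigenspace_iff] at hv ⊢
  rw [← End.mul_apply, ← map_mul, ← (Subgroup.mem_center_iff.mp hz g), map_mul, End.mul_apply, hv,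
    map_smul]

theorem exists_irreducible_le [FiniteDimensional k V] (E : Submodule k V)
    (hE : ∀ g, ∀ v ∈ E, ρ g v ∈ E) (hE0 : E ≠ ⊥) :
    ∃ W ≤ E, (∀ g, ∀ v ∈ W, ρ g v ∈ W) ∧ W ≠ ⊥ ∧
      ∀ U ≤ W, (∀ g, ∀ v ∈ U, ρ g v ∈ U) → U = ⊥ ∨ U = W := by
  obtain ⟨W, ⟨hWE, hW, hW0⟩, hmin⟩ := wellFounded_lt.has_min
    {W : Submodule k V | W ≤ E ∧ (∀ g, ∀ v ∈ W, ρ g v ∈ W) ∧ W ≠ ⊥} ⟨E, le_rfl, hE, hE0⟩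
  refine ⟨W, hWE, hW, hW0, fun U hUW hU => or_iff_not_imp_left.mpr fun hU0 => ?_⟩
  exact hUW.eq_of_not_lt (hmin U ⟨hUW.trans hWE, hU, hU0⟩)

theorem pow_finrank_eq_one_of_mem_commutator (W : Submodule k V)
    (hW : ∀ g, ∀ v ∈ W, ρ g v ∈ W) {z : G} (hz : z ∈ commutator G) {μ : k}
    (hWμ : W ≤ End.eigenspace (ρ z) μ) : μ ^ finrank k W = 1 := by
  have hdet : (LinearMap.det.comp (ρ.subrepresentation W hW)).toHomUnits z = 1 :=
    Abelianization.commutator_subset_ker _ hz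
  have hscalar : ρ.subrepresentation W hW z = μ • 1 :=
    LinearMap.ext fun w => Subtype.ext (End.mem_eigenspace_iff.mp (hWμ w.2))
  simpa [hscalar, LinearMap.det_smul] using congrArg Units.val hdet

end Representation

/-- Let `G` be a non-abelian finite `p`-group and `V` a finite-dimensional complex
representation of `G` on which the center of `G` acts faithfully. Then `V` contains an
irreducible `G`-subrepresentation whose dimension is divisible by `p`. -/
theorem stmt5 (p : ℕ) (hp : p.Prime) (G : Type*) [Group G] [Finite G] (hG : IsPGroup p G)
    (hna : ¬ ∀ a b : G, a * b = b * a)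
    (V : Type*) [AddCommGroup V] [Module ℂ V] [FiniteDimensional ℂ V]
    (ρ : Representation ℂ G V)
    (hZ : ∀ z ∈ Subgroup.center G, (∀ v : V, ρ z v = v) → z = 1) :
    ∃ W : Submodule ℂ V,
      (∀ (g : G), ∀ v ∈ W, ρ g v ∈ W) ∧ W ≠ ⊥ ∧
      (∀ U : Submodule ℂ V, U ≤ W → (∀ (g : G), ∀ v ∈ U, ρ g v ∈ U) → U = ⊥ ∨ U = W) ∧
      p ∣ Module.finrank ℂ W := by
  have : Fact p.Prime := ⟨hp⟩
  have hcomm : commutator G ≠ ⊥ := fun h =>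
    hna fun a b => ((commutator_eq_bot_iff G).mp h).is_comm.comm a b
  obtain ⟨z, hz, hzc, hz1⟩ := hG.exists_mem_center_ne_one_of_normal hcomm
  obtain ⟨n, hzn⟩ := hG z
  have hρzn : ρ z ^ p ^ n = 1 := by rw [← map_pow, hzn, map_one]
  have hρz : ρ z ≠ 1 := fun h => hz1 (hZ z hzc fun v => LinearMap.congr_fun h v)
  obtain ⟨μ, hμ1, hμ⟩ := End.exists_hasEigenvalue_ne_one_of_pow_eq_one
    (by exact_mod_cast (pow_pos hp.pos n).ne') hρzn hρz
  obtain ⟨W, hWE, hW, hW0, hWirr⟩ := Representation.exists_irreducible_le ρ _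
    (Representation.apply_mem_eigenspace_of_mem_center ρ hzc μ) hμ
  exact ⟨W, hW, hW0, hWirr, hp.dvd_of_pow_eq_one hμ1 (hμ.pow_eq_one hρzn)
    (Representation.pow_finrank_eq_one_of_mem_commutator ρ W hW hz hWE)⟩
end

section
/- Every finite abelian subgroup G of GL_n(k), for k an algebraically closed field of characteristic 0, is generated by at most n elements. -/
open scoped MatrixGroups
open Module

/-- Bridge: additive closure to multiplicative closure. -/
lemma closure_toMul_eq_top {H : Type*} [Group H] {S : Set (Additive H)}
    (h : AddSubgroup.closure S = ⊤) :
    Subgroup.closure (Additive.toMul '' S) = ⊤ := by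
  rw [Subgroup.eq_top_iff']
  intro x
  have hx : Additive.ofMul x ∈ AddSubgroup.closure S := h ▸ AddSubgroup.mem_top _
  refine AddSubgroup.closure_induction
    (p := fun y _ => Additive.toMul y ∈ Subgroup.closure (Additive.toMul '' S))
    ?_ ?_ ?_ ?_ hx
  · exact fun y hy => Subgroup.subset_closure ⟨y, hy, rfl⟩
  · exact Subgroup.one_mem _
  · exact fun y z _ _ hy hz => Subgroup.mul_mem _ hy hz
  · exact fun y _ hy => Subgroup.inv_mem _ hy

/-- A finite group embedding in a product of `ι` copies of `kˣ` is generated by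
at most `card ι` elements. -/
lemma gen_bound {k : Type*} [Field k] {H : Type*} [Group H] [Finite H]
    {ι : Type*} [Fintype ι] (Φ : H →* (ι → kˣ)) (hΦ : Function.Injective Φ) :
    ∃ T : Finset H, Subgroup.closure (T : Set H) = ⊤ ∧ T.card ≤ Fintype.card ι := by
  classical
  set K : ι → Subgroup kˣ := fun χ => ((Pi.evalMonoidHom (fun _ => kˣ) χ).comp Φ).range with hK
  have hKfin : ∀ χ, Finite (K χ) := fun χ => Set.Finite.to_subtype (Set.finite_range _)
  have hcyc : ∀ χ, ∃ u : K χ, ∀ x : K χ, x ∈ Subgroup.zpowers u := by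
    intro χ
    haveI := hKfin χ
    exact IsCyclic.exists_generator
  choose u hu using hcyc
  let θ : (ι → ℤ) →+ Additive (ι → kˣ) :=
    AddMonoidHom.mk' (fun a => Additive.ofMul (fun χ => ((u χ : kˣ)) ^ (a χ)))
      (by
        intro a b
        rw [← ofMul_mul]
        congr 1
        funext χ
        exact zpow_add _ _ _)
  let e : Additive H →+ Additive (ι → kˣ) := MonoidHom.toAdditive Φ
  have he : Function.Injective e := fun a b hab => hΦ hab
  let P : Submodule ℤ (ι → ℤ) := AddSubgroup.toIntSubmodule (AddSubgroup.comap θ e.range)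
  have hPmem : ∀ p : P, θ p.1 ∈ e.range := fun p => p.2
  have hEinv : ∀ p : P, e (Function.invFun e (θ p.1)) = θ p.1 := by
    intro p
    obtain ⟨a, ha⟩ := hPmem p
    exact Function.invFun_eq ⟨a, ha⟩
  let ρ : P →+ Additive H :=
    AddMonoidHom.mk' (fun p => Function.invFun e (θ p.1))
      (by
        intro p q
        apply he
        rw [map_add, hEinv, hEinv, hEinv]
        exact map_add θ _ _)
  have hρ : Function.Surjective ρ := by
    intro a
    have hmem : ∀ χ, Φ (Additive.toMul a) χ ∈ K χ := fun χ => ⟨Additive.toMul a, rfl⟩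
    choose c hc using fun χ => Subgroup.mem_zpowers_iff.mp (hu χ ⟨_, hmem χ⟩)
    have hc' : ∀ χ, ((u χ : kˣ)) ^ (c χ) = Φ (Additive.toMul a) χ :=
      fun χ => congrArg Subtype.val (hc χ)
    have hθ : θ c = e a := by
      show Additive.ofMul _ = _
      congr 1
      funext χ
      exact hc' χ
    refine ⟨⟨c, show θ c ∈ e.range from ⟨a, hθ.symm⟩⟩, ?_⟩
    show Function.invFun e (θ c) = a
    apply he
    rw [hθ]
    exact Function.invFun_eq ⟨a, rfl⟩
  obtain ⟨r, b⟩ := Submodule.basisOfPid (Pi.basisFun ℤ ι) P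
  have hr : r ≤ Fintype.card ι := by
    have h1 : finrank ℤ P = r := by
      rw [finrank_eq_card_basis b, Fintype.card_fin]
    have h2 : finrank ℤ P ≤ finrank ℤ (ι → ℤ) := Submodule.finrank_le P
    rw [finrank_pi] at h2
    omega
  have hclos : AddSubgroup.closure (Set.range ⇑b) = (⊤ : AddSubgroup P) := by
    rw [← Submodule.span_int_eq_addSubgroupClosure, b.span_eq]
    rfl
  have h2 : AddSubgroup.closure (⇑ρ '' Set.range ⇑b) = ⊤ := by
    rw [← AddMonoidHom.map_closure, hclos, ← AddMonoidHom.range_eq_map]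
    exact AddMonoidHom.range_eq_top.mpr hρ
  refine ⟨Finset.image (fun j => Additive.toMul (ρ (b j))) Finset.univ, ?_, ?_⟩
  · have : ((Finset.image (fun j => Additive.toMul (ρ (b j))) Finset.univ : Finset H) : Set H)
        = Additive.toMul '' (⇑ρ '' Set.range ⇑b) := by
      rw [Finset.coe_image, Finset.coe_univ, Set.image_univ, ← Set.range_comp, ← Set.range_comp]
      rfl
    rw [this]
    exact closure_toMul_eq_top h2
  · exact le_trans (Finset.card_image_le) (by simp [hr])

/-- Every finite abelian subgroup `G` of `GL_n(k)`, for `k` algebraically closed of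
characteristic `0`, is generated by at most `n` elements. -/
theorem stmt6 (n : ℕ) (k : Type*) [Field k] [IsAlgClosed k] [CharZero k]
    (G : Subgroup (GL (Fin n) k)) [Finite G]
    (hab : ∀ a b : G, a * b = b * a) :
    ∃ S : Finset (GL (Fin n) k), (S : Set (GL (Fin n) k)) ⊆ (G : Set (GL (Fin n) k)) ∧
      Subgroup.closure (S : Set (GL (Fin n) k)) = G ∧ S.card ≤ n := by
  classical
  -- the action of G on V = Fin n → k
  let f : G → Module.End k (Fin n → k) := fun g =>
    Matrix.toLinAlgEquiv' ((g : GL (Fin n) k) : Matrix (Fin n) (Fin n) k)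
  have hmul : ∀ g h : G, f (g * h) = f g * f h := by
    intro g h
    show Matrix.toLinAlgEquiv' _ = _
    rw [show (((g * h : G) : GL (Fin n) k) : Matrix (Fin n) (Fin n) k)
        = ((g : GL (Fin n) k) : Matrix (Fin n) (Fin n) k)
          * ((h : GL (Fin n) k) : Matrix (Fin n) (Fin n) k) by rfl, map_mul]
  have hone : f 1 = 1 := by
    show Matrix.toLinAlgEquiv' _ = 1
    rw [show (((1 : G) : GL (Fin n) k) : Matrix (Fin n) (Fin n) k) = 1 by rfl, map_one]
  have hcomm : ∀ g h : G, Commute (f g) (f h) := by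
    intro g h
    show f g * f h = f h * f g
    rw [← hmul, ← hmul, hab]
  have hsup : ∀ g : G, ⨆ μ, (f g).maxGenEigenspace μ = ⊤ := fun g =>
    Module.End.iSup_maxGenEigenspace_eq_top _
  set W : (G → k) → Submodule k (Fin n → k) :=
    fun χ => ⨅ g, (f g).maxGenEigenspace (χ g) with hWdef
  have htop : ⨆ χ, W χ = ⊤ :=
    Module.End.iSup_iInf_maxGenEigenspace_eq_top_of_iSup_maxGenEigenspace_eq_top_of_commute
      f (fun g h _ => hcomm g h) hsup
  have hind : iSupIndep W :=
    Module.End.independent_iInf_maxGenEigenspace_of_forall_mapsTo f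
      (fun g h φ => Module.End.mapsTo_maxGenEigenspace_of_comm (hcomm h g) φ)
  -- semisimplicity
  have hss : ∀ g : G, (f g).IsFinitelySemisimple := by
    intro g
    have hpos : orderOf g ≠ 0 := (orderOf_pos g).ne'
    have hsq : Squarefree (Polynomial.X ^ (orderOf g) - Polynomial.C (1 : k)) :=
      (Polynomial.separable_X_pow_sub_C (1 : k)
        (by exact_mod_cast hpos) one_ne_zero).squarefree
    refine (Module.End.isSemisimple_of_squarefree_aeval_eq_zero hsq ?_).isFinitelySemisimple
    have hfp : f g ^ orderOf g = 1 := by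
      have : ∀ m : ℕ, f (g ^ m) = f g ^ m := by
        intro m
        induction m with
        | zero => simpa using hone
        | succ m ih => rw [pow_succ, pow_succ, hmul, ih]
      rw [← this, pow_orderOf_eq_one, hone]
    simp [Polynomial.aeval_X_pow, map_sub, hfp, Algebra.algebraMap_eq_smul_one]
  have heig : ∀ (g : G) (μ : k),
      (f g).maxGenEigenspace μ = Module.End.eigenspace (f g) μ :=
    fun g μ => (hss g).maxGenEigenspace_eq_eigenspace μ
  -- the finite index set of simultaneous eigencharacters
  haveI : Fintype {χ : G → k // W χ ≠ ⊥} := hind.fintypeNeBotOfFiniteDimensional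
  have hcard : Fintype.card {χ : G → k // W χ ≠ ⊥} ≤ n := by
    have h1 := hind.subtype_ne_bot_le_finrank
    rwa [Module.finrank_fin_fun] at h1
  -- choose common eigenvectors
  have hvec : ∀ χ : {χ : G → k // W χ ≠ ⊥}, ∃ v ∈ W χ.1, v ≠ 0 :=
    fun χ => Submodule.exists_mem_ne_zero_of_ne_bot χ.2
  choose v hvW hv0 using hvec
  have hvEig : ∀ (χ : {χ : G → k // W χ ≠ ⊥}) (g : G), f g (v χ) = χ.1 g • v χ := by
    intro χ g
    have h1 : v χ ∈ (f g).maxGenEigenspace (χ.1 g) := (iInf_le _ g : W χ.1 ≤ _) (hvW χ)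
    rw [heig, Module.End.mem_eigenspace_iff] at h1
    exact h1
  have hcancel : ∀ (χ : {χ : G → k // W χ ≠ ⊥}) (a b : k), a • v χ = b • v χ → a = b := by
    intro χ a b h1
    by_contra hne
    have h2 : (a - b) • v χ = 0 := by rw [sub_smul, h1, sub_self]
    rcases smul_eq_zero.mp h2 with h3 | h3
    · exact hne (sub_eq_zero.mp h3)
    · exact hv0 χ h3
  have hmul' : ∀ (χ : {χ : G → k // W χ ≠ ⊥}) (g h : G), χ.1 (g * h) = χ.1 g * χ.1 h := by
    intro χ g h
    apply hcancel χ
    rw [← hvEig, hmul, Module.End.mul_apply, hvEig, map_smul, hvEig, smul_smul, mul_comm]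
  have hone' : ∀ χ : {χ : G → k // W χ ≠ ⊥}, χ.1 1 = 1 := by
    intro χ
    apply hcancel χ
    rw [← hvEig, hone, Module.End.one_apply, one_smul]
  have hunit : ∀ (χ : {χ : G → k // W χ ≠ ⊥}) (g : G), χ.1 g ≠ 0 := by
    intro χ g h0
    have h1 : χ.1 g * χ.1 g⁻¹ = 1 := by rw [← hmul', mul_inv_cancel, hone']
    rw [h0, zero_mul] at h1
    exact zero_ne_one h1
  -- the injective character map
  let Φ : G →* ({χ : G → k // W χ ≠ ⊥} → kˣ) :=
    MonoidHom.mk' (fun g χ => Units.mk0 (χ.1 g) (hunit χ g))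
      (by
        intro g h
        funext χ
        exact Units.ext (hmul' χ g h))
  have hΦ : Function.Injective Φ := by
    rw [injective_iff_map_eq_one]
    intro g hg
    have hχ : ∀ χ : {χ : G → k // W χ ≠ ⊥}, χ.1 g = 1 := by
      intro χ
      have := congrFun hg χ
      exact congrArg Units.val this
    have hfg : f g = 1 := by
      have hWle : ∀ χ : G → k, W χ ≤ LinearMap.eqLocus (f g) 1 := by
        intro χ
        by_cases hbot : W χ = ⊥
        · rw [hbot]; exact bot_le
        · intro w hw
          have h1 : w ∈ (f g).maxGenEigenspace (χ g) := (iInf_le _ g : W χ ≤ _) hw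
          rw [heig, Module.End.mem_eigenspace_iff] at h1
          show f g w = (1 : Module.End k (Fin n → k)) w
          rw [h1, show χ g = 1 from hχ ⟨χ, hbot⟩, one_smul, Module.End.one_apply]
      have h2 : ⊤ ≤ LinearMap.eqLocus (f g) 1 := by
        rw [← htop]; exact iSup_le hWle
      apply LinearMap.ext
      intro w
      exact h2 Submodule.mem_top
    have hmat : ((g : GL (Fin n) k) : Matrix (Fin n) (Fin n) k) = 1 := by
      apply Matrix.toLinAlgEquiv'.injective
      rw [map_one]
      exact hfg
    exact Subtype.ext (Units.ext hmat)
  obtain ⟨T, hT, hTcard⟩ := gen_bound Φ hΦ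
  refine ⟨T.image Subtype.val, ?_, ?_, ?_⟩
  · intro x hx
    rw [Finset.coe_image] at hx
    obtain ⟨y, _, rfl⟩ := hx
    exact y.2
  · rw [Finset.coe_image, show (Subtype.val : ↥G → GL (Fin n) k) = ⇑G.subtype from rfl,
      ← MonoidHom.map_closure, hT, ← MonoidHom.range_eq_map, Subgroup.subtype_range]
  · exact le_trans (Finset.card_image_le) (hTcard.trans hcard)
end

section
/- Let V be a p-dimensional vector space over an algebraically closed field of characteristic 0, and let G ⊆ GL(V) be a non-abelian finite p-group. Then G has no nonzero semi-invariant homogeneous polynomial of degree d with 1 ≤ d < p; equivalently, Sym^d V^∨ contains no one-dimensional G-subrepresentation for 1 ≤ d < p. -/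
/-!
A semi-invariant `f` of degree `d` spans a `G`-stable line, on which `G` acts by a character `χ`,
and a scalar matrix `μ • 1` acts on `f` by `μ ^ d`. So it suffices to find a scalar `μ • 1 ≠ 1`
in `[G, G]`, where `χ` is trivial: then `μ` is a primitive `p`-th root of unity with `μ ^ d = 1`,
so `p ∣ d`.

Since `G` is a non-abelian `p`-group, `[G, G]` contains a central element `z` of order `p`. It is
diagonalizable and `G` preserves its eigenspaces. If `z` were not scalar, these would have
dimension `< p`, and a representation of a `p`-group of dimension `< p` has commutative image, so
`G` would be abelian. That last fact is proved by induction on the dimension with the same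
argument, where now a scalar `μ • 1 ≠ 1` in the commutator subgroup cannot occur: its
determinant `μ ^ dim` is `1`, so `p ∣ dim`.
-/

open Module

namespace IsPGroup

variable {p : ℕ} [Fact p.Prime] {G : Type*} [Group G] [Finite G]

open Subgroup in
theorem inf_center_ne_bot (hG : IsPGroup p G) {N : Subgroup G} [N.Normal] (hN : N ≠ ⊥) :
    N ⊓ center G ≠ ⊥ := by
  obtain ⟨n, hn, hcard⟩ :=
    (hG.to_subgroup N).nontrivial_iff_card.mp ((nontrivial_iff_ne_bot N).mpr hN)
  -- The fixed points of `G` acting on `N` by conjugation are `N ⊓ center G`; as `p ∣ |N|`,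
  -- there is one besides `1`.
  have h1 : (1 : N) ∈ MulAction.fixedPoints (ConjAct G) N := fun g ↦ Subtype.ext (by simp)
  obtain ⟨z, hz, hz1⟩ := (hG.of_equiv ConjAct.toConjAct)
    |>.exists_fixed_point_of_prime_dvd_card_of_fixed_point N (hcard ▸ dvd_pow_self p hn.ne') h1
  refine (ne_bot_iff_exists_ne_one).mpr ⟨⟨z, z.2, mem_center_iff.mpr fun g ↦ ?_⟩, ?_⟩
  · have := congrArg Subtype.val (hz (ConjAct.toConjAct g))
    rw [ConjAct.Subgroup.val_conj_smul, ConjAct.toConjAct_smul] at this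
    exact mul_inv_eq_iff_eq_mul.mp this
  · exact fun h ↦ hz1 (Subtype.ext (congrArg (fun x : ↥(N ⊓ center G) ↦ (x : G)) h).symm)

theorem exists_mem_commutator_center_orderOf_eq (hG : IsPGroup p G)
    (hG' : ¬ ∀ a b : G, Commute a b) :
    ∃ z ∈ commutator G, z ∈ Subgroup.center G ∧ orderOf z = p := by
  have hcomm : commutator G ≠ ⊥ := by
    rw [Ne, commutator_eq_bot_iff_center_eq_top, Subgroup.eq_top_iff']
    exact fun h ↦ hG' fun a b ↦ Subgroup.mem_center_iff.mp (h b) a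
  obtain ⟨n, hn, hcard⟩ := (hG.to_subgroup _).nontrivial_iff_card.mp
    ((Subgroup.nontrivial_iff_ne_bot _).mpr (hG.inf_center_ne_bot hcomm))
  obtain ⟨z, hz⟩ := exists_prime_orderOf_dvd_card' p (hcard ▸ dvd_pow_self p hn.ne')
  exact ⟨z, z.2.1, z.2.2, by rwa [Subgroup.orderOf_coe]⟩

end IsPGroup

open Polynomial in
theorem Module.End.isSemisimple_of_pow_eq_one_s8 {k W : Type*} [Field k] [AddCommGroup W]
    [Module k W] {f : End k W} {n : ℕ} (hn : (n : k) ≠ 0) (hf : f ^ n = 1) : f.IsSemisimple :=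
  isSemisimple_of_squarefree_aeval_eq_zero (X_pow_sub_one_separable_iff.mpr hn).squarefree
    (by simp [hf])

theorem IsPrimitiveRoot.of_orderOf_smul_one {k A : Type*} [Field k] [Ring A] [Algebra k A]
    {μ : k} {n : ℕ} (hn : n ≠ 1) (h : orderOf (μ • 1 : A) = n) : IsPrimitiveRoot μ n := by
  have : Nontrivial A := by
    by_contra hA
    rw [not_nontrivial_iff_subsingleton] at hA
    exact hn (h ▸ orderOf_eq_one_iff.mpr (Subsingleton.elim _ _))
  rw [← Algebra.algebraMap_eq_smul_one] at h
  have hμ : orderOf μ = n := h ▸ (orderOf_injective _ (algebraMap k A).injective μ).symm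
  exact hμ ▸ IsPrimitiveRoot.orderOf μ

namespace Representation

variable {k G W : Type*} [Field k] [Group G] [AddCommGroup W] [Module k W]

theorem dvd_finrank_of_mem_commutator (ρ : Representation k G W) {g : G}
    (hg : g ∈ commutator G) {μ : k} {n : ℕ} (hμ : IsPrimitiveRoot μ n) (hgμ : ρ g = μ • 1) :
    n ∣ finrank k W := by
  have hdet : LinearMap.det (ρ g) = 1 := congrArg Units.val
    (Abelianization.commutator_subset_ker (LinearMap.det.comp ρ).toHomUnits hg)
  rw [hgμ, LinearMap.det_smul, map_one, mul_one] at hdet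
  exact hμ.dvd_of_pow_eq_one _ hdet

variable [IsAlgClosed k] [CharZero k] [FiniteDimensional k W] [Finite G]

theorem commute_of_mem_center_of_ne_smul_one {ρ : Representation k G W}
    (hρ : Function.Injective ρ) {z : G} (hz : z ∈ Subgroup.center G)
    (hsc : ∀ μ : k, ρ z ≠ μ • 1)
    (hsmall : ∀ E : Submodule k W, finrank k E < finrank k W →
      ∀ (σ : Representation k G E) (a b : G), Commute (σ a) (σ b))
    (a b : G) : Commute a b := by
  have hdiag : ⨆ μ, End.eigenspace (ρ z) μ = ⊤ :=
    (End.isSemisimple_of_pow_eq_one_s8 (Nat.cast_ne_zero.mpr (orderOf_pos z).ne')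
      (by rw [← map_pow, pow_orderOf_eq_one, map_one])).iSup_eigenspace_eq_top
  have hinv (μ : k) (g : G) : End.eigenspace (ρ z) μ ≤ (End.eigenspace (ρ z) μ).comap (ρ g) :=
    fun _ hx ↦ End.mapsTo_genEigenspace_of_comm
      (Commute.map (Subgroup.mem_center_iff.mp hz g).symm ρ) μ 1 hx
  apply hρ
  rw [map_mul, map_mul, ← LinearMap.eqLocus_eq_top, eq_top_iff, ← hdiag]
  refine iSup_le fun μ x hx ↦ ?_
  have hlt : finrank k (End.eigenspace (ρ z) μ) < finrank k W := Submodule.finrank_lt fun htop ↦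
    hsc μ (LinearMap.ext fun y ↦ End.mem_eigenspace_iff.mp (htop ▸ Submodule.mem_top))
  exact congrArg Subtype.val
    (LinearMap.congr_fun (hsmall _ hlt (ρ.subrepresentation _ (hinv μ)) a b) ⟨x, hx⟩)

variable {p : ℕ} [Fact p.Prime]

theorem commute_apply_of_finrank_lt (hG : IsPGroup p G) (ρ : Representation k G W)
    (hW : finrank k W < p) (a b : G) : Commute (ρ a) (ρ b) := by
  induction hn : finrank k W using Nat.strong_induction_on generalizing G W with
  | _ n ih =>
  -- `G ⧸ ker ρ` acts faithfully, so its central elements `≠ 1` act nontrivially.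
  let ρQ : Representation k (G ⧸ ρ.toHomUnits.ker) W :=
    (Units.coeHom _).comp (QuotientGroup.kerLift ρ.toHomUnits)
  have hρQ : Function.Injective ρQ :=
    Units.val_injective.comp (QuotientGroup.kerLift_injective _)
  suffices hQ : ∀ x y : G ⧸ ρ.toHomUnits.ker, Commute x y from
    (hQ (QuotientGroup.mk a) (QuotientGroup.mk b)).map ρQ
  by_contra hQ
  obtain ⟨z, hzc, hzC, hzp⟩ := (hG.to_quotient _).exists_mem_commutator_center_orderOf_eq hQ
  by_cases hsc : ∃ μ : k, ρQ z = μ • 1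
  · obtain ⟨μ, hμ⟩ := hsc
    have hprim : IsPrimitiveRoot μ p := .of_orderOf_smul_one (Fact.out : p.Prime).ne_one
      (by rw [← hμ, orderOf_injective ρQ hρQ, hzp])
    have hpos : 0 < finrank k W := by
      refine Nat.pos_of_ne_zero fun h0 ↦ (Fact.out : p.Prime).ne_one ?_
      have := finrank_zero_iff.mp h0
      rw [← hzp, orderOf_eq_one_iff]
      exact hρQ (Subsingleton.elim _ _)
    have := Nat.le_of_dvd hpos (ρQ.dvd_finrank_of_mem_commutator hzc hprim hμ)
    omega
  · exact hQ (commute_of_mem_center_of_ne_smul_one hρQ hzC (not_exists.mp hsc)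
      fun E hE σ a b ↦ ih _ (hn ▸ hE) (hG.to_quotient _) σ (by omega) a b rfl)

theorem exists_mem_commutator_eq_smul_one (hG : IsPGroup p G) {ρ : Representation k G W}
    (hρ : Function.Injective ρ) (hW : finrank k W ≤ p) (hG' : ¬ ∀ a b : G, Commute a b) :
    ∃ g ∈ commutator G, ∃ μ : k, IsPrimitiveRoot μ p ∧ ρ g = μ • 1 := by
  obtain ⟨z, hzc, hzC, hzp⟩ := hG.exists_mem_commutator_center_orderOf_eq hG'
  by_contra! hsc
  refine hG' (commute_of_mem_center_of_ne_smul_one hρ hzC (fun μ hμ ↦ hsc z hzc μ ?_ hμ)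
    fun E hE σ ↦ commute_apply_of_finrank_lt hG σ (by omega))
  exact .of_orderOf_smul_one (Fact.out : p.Prime).ne_one
    (by rw [← hμ, orderOf_injective ρ hρ, hzp])

end Representation

namespace MvPolynomial

variable {σ R : Type*} [CommSemiring R]

theorem IsHomogeneous.aeval_smul_X {f : MvPolynomial σ R} {d : ℕ} (hf : f.IsHomogeneous d)
    (μ : R) : MvPolynomial.aeval (fun i ↦ μ • X i) f = μ ^ d • f := by
  conv_lhs => rw [f.as_sum, map_sum]
  conv_rhs => rw [f.as_sum, Finset.smul_sum]
  refine Finset.sum_congr rfl fun s hs ↦ ?_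
  rw [aeval_monomial, monomial_eq, Finsupp.prod, Finsupp.prod, algebraMap_eq]
  simp only [smul_pow, Finset.prod_smul, Finset.prod_pow_eq_pow_sum, mul_smul_comm]
  rw [← hf.degree_eq_sum_deg_support hs]

variable [Fintype σ]

/-- `matrixSubst A f` is the polynomial `x ↦ f (A x)`; so `A ↦ matrixSubst A` reverses
products. -/
noncomputable def matrixSubst (A : Matrix σ σ R) : MvPolynomial σ R →ₐ[R] MvPolynomial σ R :=
  aeval fun i ↦ ∑ j, A i j • X j

theorem matrixSubst_one [DecidableEq σ] : matrixSubst (1 : Matrix σ σ R) = AlgHom.id R _ := by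
  ext i
  simp [matrixSubst, Matrix.one_apply, ite_smul]

theorem matrixSubst_smul_one [DecidableEq σ] (μ : R) :
    matrixSubst (μ • 1 : Matrix σ σ R) = aeval fun i ↦ μ • X i := by
  ext i
  simp [matrixSubst, Matrix.one_apply, ite_smul]

theorem matrixSubst_mul (A B : Matrix σ σ R) :
    matrixSubst (A * B) = (matrixSubst B).comp (matrixSubst A) := by
  refine algHom_ext fun i ↦ ?_
  simp only [matrixSubst, AlgHom.comp_apply, aeval_X, map_sum, map_smul, Matrix.mul_apply,
    Finset.sum_smul, smul_smul, Finset.smul_sum]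
  exact Finset.sum_comm

theorem exists_monoidHom_matrixSubst_eq_smul {M K : Type*} [Monoid M] [Field K] [DecidableEq σ]
    (ρ : M →* Matrix σ σ K) {f : MvPolynomial σ K} (hf : f ≠ 0)
    (h : ∀ g, ∃ c : K, matrixSubst (ρ g) f = c • f) :
    ∃ χ : M →* K, ∀ g, matrixSubst (ρ g) f = χ g • f := by
  choose c hc using h
  have hinj := smul_left_injective K hf
  refine ⟨{ toFun := c, map_one' := hinj ?_, map_mul' := fun g g' ↦ hinj ?_ }, hc⟩
  · simp only [← hc, map_one, matrixSubst_one, AlgHom.id_apply, one_smul]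
  · simp only [← hc, map_mul, matrixSubst_mul, AlgHom.comp_apply]
    rw [hc, map_smul, hc, smul_smul, mul_comm]

end MvPolynomial

open scoped MatrixGroups

open MvPolynomial in
/-- Let `V` be a `p`-dimensional vector space over an algebraically closed field of
characteristic `0` and `G ⊆ GL(V)` a non-abelian finite `p`-group. Then `G` has no nonzero
homogeneous semi-invariant of degree `d` with `1 ≤ d < p`. -/
theorem stmt8 (p : ℕ) (hp : p.Prime) (k : Type*) [Field k] [IsAlgClosed k] [CharZero k]
    (G : Subgroup (GL (Fin p) k)) [Finite G] (hG : IsPGroup p G)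
    (hna : ¬ ∀ a b : G, a * b = b * a)
    (d : ℕ) (hd1 : 1 ≤ d) (hdp : d < p)
    (f : MvPolynomial (Fin p) k) (hf0 : f ≠ 0) (hf : f.IsHomogeneous d)
    (hsemi : ∀ g : GL (Fin p) k, g ∈ G → ∃ c : k,
      MvPolynomial.aeval
        (fun i => ∑ j, (g : Matrix (Fin p) (Fin p) k) i j • MvPolynomial.X j) f = c • f) :
    False := by
  have := Fact.mk hp
  let σ : G →* Matrix (Fin p) (Fin p) k := (Units.coeHom _).comp G.subtype
  let ρ : Representation k G (Fin p → k) :=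
    Matrix.toLinAlgEquiv'.toRingEquiv.toMonoidHom.comp σ
  have hρ : Function.Injective ρ :=
    Matrix.toLinAlgEquiv'.injective.comp (Units.val_injective.comp Subtype.val_injective)
  obtain ⟨χ, hχ⟩ := exists_monoidHom_matrixSubst_eq_smul σ hf0 fun g ↦ hsemi g g.2
  obtain ⟨g, hg, μ, hμ, hgμ⟩ := ρ.exists_mem_commutator_eq_smul_one hG hρ (by simp) hna
  have hσg : σ g = μ • 1 := Matrix.toLinAlgEquiv'.injective <| by
    rw [map_smul, map_one]
    exact hgμ
  have hχg : χ g = 1 :=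
    congrArg Units.val (Abelianization.commutator_subset_ker χ.toHomUnits hg)
  have hμd : μ ^ d = 1 := smul_left_injective k hf0 <| by
    simp only [← hf.aeval_smul_X, ← matrixSubst_smul_one, ← hσg, hχ, hχg, one_smul]
  exact absurd (Nat.le_of_dvd hd1 (hμ.dvd_of_pow_eq_one d hμd)) (by omega)
end

section
/- Let V be a finite-dimensional complex vector space and G ⊆ GL(V) a finite abelian p-group. Suppose G preserves a hypersurface R ⊂ P(V) of degree less than p. Then G has a fixed point on R. -/
/-!
Being finite and abelian, `G` is simultaneously diagonalizable. By the Nullstellensatz, `G`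
permutes the prime factors of `f` up to scalars. An orbit has `p`-power length, and it has fewer
than `p` elements because their degrees add up to at most `d < p`. So every prime factor, and
hence `f`, is semi-invariant: `f ∘ g = c_g f`. If `f` vanishes at a common eigenvector, that point
of `R` is fixed. Otherwise each eigenvalue `λ` of `g` satisfies `λ ^ d = c_g`, and `λ` is a
`p`-power root of unity with `d < p`, so all eigenvalues of `g` agree. Then `G` acts by scalars,
and it fixes every point of `R`, which is nonempty because `n ≥ 2`.
-/

open scoped MatrixGroups

/-- The action of an element of `GL_n(ℂ)` on the projective space `P(V)`, `V = ℂ^n`. -/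
noncomputable def glAct {n : ℕ} (A : GL (Fin n) ℂ) :
    Projectivization ℂ (Fin n → ℂ) → Projectivization ℂ (Fin n → ℂ) :=
  Projectivization.map (Matrix.GeneralLinearGroup.toLin A).toLinearEquiv.toLinearMap
    (Matrix.GeneralLinearGroup.toLin A).toLinearEquiv.injective

open MvPolynomial Function
open scoped Matrix

theorem eq_of_pow_eq_pow_of_coprime {K : Type*} [Field K] {a b : K} {d N : ℕ}
    (hdN : d.Coprime N) (ha : a ^ N = 1) (hb : b ^ N = 1) (hab : a ^ d = b ^ d) : a = b := by
  rcases N.eq_zero_or_pos with rfl | hN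
  · rwa [(Nat.coprime_zero_right d).1 hdN, pow_one, pow_one] at hab
  have hb0 : b ≠ 0 := by rintro rfl; rw [zero_pow hN.ne'] at hb; exact zero_ne_one hb
  rw [← div_eq_one_iff_eq hb0, ← pow_one (a / b), ← hdN, pow_gcd_eq_one]
  exact ⟨by rw [div_pow, hab, div_self (pow_ne_zero _ hb0)], by rw [div_pow, ha, hb, div_one]⟩

theorem Function.IsPeriodicPt.isFixedPt_of_minimalPeriod_lt {α : Type*} {f : α → α} {x : α}
    {p k : ℕ} (hp : p.Prime) (hx : IsPeriodicPt f (p ^ k) x) (hlt : minimalPeriod f x < p) :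
    IsFixedPt f x := by
  obtain ⟨j, -, hj⟩ := (Nat.dvd_prime_pow hp).1 hx.minimalPeriod_dvd
  rw [← minimalPeriod_eq_one_iff_isFixedPt, hj]
  rcases j with _ | j
  · rfl
  · exact absurd hlt (not_lt.2 (hj ▸ Nat.le_self_pow (Nat.succ_ne_zero j) p))

section PrimeFactors

variable {M : Type*} [CommMonoidWithZero M]

/-- The orbit of `Associates.mk q` under `e` consists of distinct prime factors of `f`, so its
length is a power of `p` smaller than `p`. -/
theorem associated_apply_of_iterate_eq {F : Type*} [EquivLike F M M] [MulEquivClass F M M]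
    (e : F) {p k : ℕ} (hp : p.Prime) {q f : M} (hper : e^[p ^ k] q = q) (hq : Prime q)
    (hqf : q ∣ f) (hstab : ∀ r, Prime r → r ∣ f → e r ∣ f)
    (hbound : ∀ s : Finset (Associates M), (∀ a ∈ s, Prime a ∧ a ∣ Associates.mk f) → s.card < p) :
    Associated (e q) q := by
  classical
  let ψ : Associates M → Associates M := Quotient.map e fun _ _ h => h.map e
  have hψ (m : ℕ) : ψ^[m] (Associates.mk q) = Associates.mk (e^[m] q) := by
    induction m with
    | zero => rfl
    | succ m ih => rw [iterate_succ_apply', ih, iterate_succ_apply']; rfl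
  have horbit (m : ℕ) : Prime (e^[m] q) ∧ e^[m] q ∣ f := by
    induction m with
    | zero => exact ⟨hq, hqf⟩
    | succ m ih =>
      rw [iterate_succ_apply']
      exact ⟨(MulEquiv.prime_iff e).2 ih.1, hstab _ ih.1 ih.2⟩
  have hper' : IsPeriodicPt ψ (p ^ k) (Associates.mk q) := by
    rw [IsPeriodicPt, IsFixedPt, hψ, hper]
  refine Associates.mk_eq_mk_iff_associated.1 (hper'.isFixedPt_of_minimalPeriod_lt hp ?_)
  set t := minimalPeriod ψ (Associates.mk q)
  have hcard : ((Finset.range t).image fun m => ψ^[m] (Associates.mk q)).card = t := by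
    rw [Finset.card_image_of_injOn, Finset.card_range]
    simpa [Set.InjOn] using iterate_injOn_Iio_minimalPeriod (f := ψ) (x := Associates.mk q)
  rw [← hcard]
  refine hbound _ fun a ha => ?_
  obtain ⟨m, -, rfl⟩ := Finset.mem_image.1 ha
  rw [hψ]
  exact ⟨Associates.prime_mk.2 (horbit m).1, Associates.mk_dvd_mk.2 (horbit m).2⟩

theorem associated_apply_of_forall_prime_dvd [UniqueFactorizationMonoid M] {F : Type*}
    [FunLike F M M] [MonoidWithZeroHomClass F M M] (φ : F) {a : M}
    (h : ∀ q, Prime q → q ∣ a → Associated (φ q) q) : Associated (φ a) a := by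
  induction a using UniqueFactorizationMonoid.induction_on_prime with
  | h₁ => rw [map_zero]
  | h₂ u hu =>
    exact (associated_one_iff_isUnit.2 (hu.map φ)).trans (associated_one_iff_isUnit.2 hu).symm
  | h₃ a q _ hq ih =>
    rw [map_mul]
    exact (h q hq (dvd_mul_right q a)).mul_mul
      (ih fun r hr hra => h r hr (hra.trans (dvd_mul_left a q)))

end PrimeFactors

namespace Module.End

variable {K V : Type*} [Field K] [AddCommGroup V] [Module K V]

theorem isSemisimple_of_isOfFinOrder [CharZero K] {T : End K V} (hT : IsOfFinOrder T) :
    T.IsSemisimple := by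
  obtain ⟨N, hN, hTN⟩ := hT.exists_pow_eq_one
  refine isSemisimple_of_squarefree_aeval_eq_zero
    (Polynomial.separable_X_pow_sub_C 1 (Nat.cast_ne_zero.2 hN.ne') one_ne_zero).squarefree ?_
  simp [hTN]

theorem pow_eq_one_of_apply_eq_smul {T : End K V} {N : ℕ} (hT : T ^ N = 1) {v : V} (hv : v ≠ 0)
    {c : K} (h : T v = c • v) : c ^ N = 1 := by
  have := (HasEigenvector.pow_apply ⟨mem_eigenspace_iff.2 h, hv⟩ N).symm
  rwa [hT, one_apply, ← one_smul K v, smul_smul, mul_one, (smul_left_injective K hv).eq_iff] at this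

theorem span_setOf_forall_apply_eq_smul_eq_top [IsAlgClosed K] [FiniteDimensional K V]
    {ι : Type*} {T : ι → End K V} (hcomm : Pairwise fun i j => Commute (T i) (T j))
    (hT : ∀ i, (T i).IsSemisimple) :
    Submodule.span K {v | ∀ i, ∃ c : K, T i v = c • v} = ⊤ := by
  have h := iSup_iInf_maxGenEigenspace_eq_top_of_iSup_maxGenEigenspace_eq_top_of_commute T hcomm
    fun i => iSup_maxGenEigenspace_eq_top (T i)
  simp_rw [fun i => (hT i).isFinitelySemisimple.maxGenEigenspace_eq_eigenspace] at h
  refine eq_top_iff.2 (h ▸ iSup_le fun χ v hv => Submodule.subset_span fun i => ⟨χ i, ?_⟩)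
  exact mem_eigenspace_iff.1 (Submodule.mem_iInf _ |>.1 hv i)

theorem exists_forall_apply_eq_smul {T : End K V} {S : Set V} (hS : Submodule.span K S = ⊤)
    {P : K → Prop} (hP : ∀ a b, P a → P b → a = b)
    (hTS : ∀ v ∈ S, v ≠ 0 → ∃ c, P c ∧ T v = c • v) : ∃ c : K, ∀ v, T v = c • v := by
  by_cases h : ∃ v ∈ S, v ≠ 0
  · obtain ⟨v₀, hv₀S, hv₀⟩ := h
    obtain ⟨c, hc, -⟩ := hTS v₀ hv₀S hv₀
    have hle : Submodule.span K S ≤ T.eigenspace c := Submodule.span_le.2 fun w hwS => by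
      by_cases hw : w = 0
      · simp [hw]
      · obtain ⟨c', hc', hTw⟩ := hTS w hwS hw
        exact mem_eigenspace_iff.2 (hP c' c hc' hc ▸ hTw)
    exact ⟨c, fun v => mem_eigenspace_iff.1 (hle (hS ▸ Submodule.mem_top))⟩
  · push Not at h
    refine ⟨0, fun v => ?_⟩
    have hv : v ∈ Submodule.span K S := hS ▸ Submodule.mem_top
    rw [Submodule.span_eq_bot.2 h, Submodule.mem_bot] at hv
    simp [hv]

end Module.End

namespace MvPolynomial

variable {σ R K : Type*}

theorem IsHomogeneous.eval_smul [CommSemiring R] {φ : MvPolynomial σ R} {k : ℕ}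
    (hφ : φ.IsHomogeneous k) (c : R) (x : σ → R) :
    eval (c • x) φ = c ^ k * eval x φ := by
  rw [eval_eq, eval_eq, Finset.mul_sum]
  refine Finset.sum_congr rfl fun m hm => ?_
  have hdeg : ∑ i ∈ m.support, m i = k := by
    rw [← Finsupp.degree_apply, Finsupp.degree_eq_weight_one]
    exact hφ (mem_support_iff.mp hm)
  simp only [Pi.smul_apply, smul_eq_mul, mul_pow, Finset.prod_mul_distrib,
    Finset.prod_pow_eq_pow_sum, hdeg]
  ring

theorem totalDegree_prod_of_isDomain [CommRing R] [IsDomain R] {ι : Type*} {s : Finset ι}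
    {P : ι → MvPolynomial σ R} (hP : ∀ i ∈ s, P i ≠ 0) :
    (∏ i ∈ s, P i).totalDegree = ∑ i ∈ s, (P i).totalDegree := by
  cases exists_wellFoundedGT σ
  simp only [← degree_degLexDegree, MonomialOrder.degree_prod hP, map_sum]

section Field

variable [Field K]

theorem totalDegree_pos_iff_not_isUnit {f : MvPolynomial σ K} (hf : f ≠ 0) :
    0 < f.totalDegree ↔ ¬IsUnit f := by
  rw [Nat.pos_iff_ne_zero, not_iff_not, totalDegree_eq_zero_iff_eq_C,
    isUnit_iff_eq_C_of_isReduced]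
  refine ⟨fun h => ⟨_, ?_, h⟩, fun ⟨r, _, hr⟩ => by rw [hr, coeff_zero_C]⟩
  exact isUnit_iff_ne_zero.2 fun h0 => hf (by rw [h, h0, C_0])

theorem card_le_totalDegree_of_forall_prime_dvd {f : MvPolynomial σ K} (hf : f ≠ 0)
    {s : Finset (Associates (MvPolynomial σ K))} (hs : ∀ a ∈ s, Prime a ∧ a ∣ Associates.mk f) :
    s.card ≤ f.totalDegree := by
  have hprime (a) (ha : a ∈ s) : Prime (Quotient.out a : MvPolynomial σ K) := by
    rw [← Associates.prime_mk, show Associates.mk (Quotient.out a) = a from Quotient.out_eq a]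
    exact (hs a ha).1
  have hdvd : ∏ a ∈ s, (Quotient.out a : MvPolynomial σ K) ∣ f := by
    rw [← Associates.mk_dvd_mk, ← Associates.finsetProd_mk,
      Finset.prod_congr rfl fun a _ => Quotient.out_eq a]
    exact Finset.prod_primes_dvd _ (fun a ha => (hs a ha).1) fun a ha => (hs a ha).2
  calc s.card = ∑ a ∈ s, 1 := by simp
    _ ≤ ∑ a ∈ s, (Quotient.out a : MvPolynomial σ K).totalDegree := Finset.sum_le_sum fun a ha =>
        (totalDegree_pos_iff_not_isUnit (hprime a ha).ne_zero).2 (hprime a ha).not_isUnit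
    _ = (∏ a ∈ s, (Quotient.out a : MvPolynomial σ K)).totalDegree :=
        (totalDegree_prod_of_isDomain fun a ha => (hprime a ha).ne_zero).symm
    _ ≤ f.totalDegree := totalDegree_le_of_dvd_of_isDomain hdvd hf

variable [IsAlgClosed K] [Finite σ]

theorem _root_.Prime.dvd_of_forall_eval_eq_zero {q f : MvPolynomial σ K} (hq : Prime q)
    (h : ∀ x, eval x q = 0 → eval x f = 0) : q ∣ f := by
  have : (Ideal.span {q}).IsPrime := (Ideal.span_singleton_prime hq.ne_zero).2 hq
  rw [← Ideal.mem_span_singleton, ← IsPrime.vanishingIdeal_zeroLocus (K := K) (Ideal.span {q}),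
    mem_vanishingIdeal_iff]
  exact fun x hx => h x (hx q (Ideal.subset_span rfl))

theorem exists_ne_zero_eval_eq_zero_of_totalDegree_pos {i j : σ} (hij : i ≠ j)
    {f : MvPolynomial σ K} (hf : 0 < f.totalDegree) : ∃ x ≠ 0, eval x f = 0 := by
  have hf0 : f ≠ 0 := by rintro rfl; simp at hf
  obtain ⟨q, hq, hqf⟩ :=
    WfDvdMonoid.exists_irreducible_factor ((totalDegree_pos_iff_not_isUnit hf0).1 hf) hf0
  replace hq := hq.prime
  by_contra! hne
  -- A prime factor vanishing only at the origin divides every variable.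
  have hdvdX (l : σ) : q ∣ X l := hq.dvd_of_forall_eval_eq_zero fun x hx => by
    by_cases hx0 : x = 0
    · simp [hx0]
    · obtain ⟨w, rfl⟩ := hqf
      exact absurd (by rw [eval_mul, hx, zero_mul]) (hne x hx0)
  have hXi := hq.associated_of_dvd X_prime (hdvdX i)
  have hXj := hq.associated_of_dvd X_prime (hdvdX j)
  exact hij (X_dvd_X.1 (hXi.symm.trans hXj).dvd)

end Field

section LinearSubst

variable {ι : Type*} [Fintype ι] [CommRing R]

noncomputable def linearSubst (A : Matrix ι ι R) : MvPolynomial ι R →ₐ[R] MvPolynomial ι R :=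
  aeval fun i => ∑ j, C (A i j) * X j

theorem eval_linearSubst (A : Matrix ι ι R) (φ : MvPolynomial ι R) (x : ι → R) :
    eval x (linearSubst A φ) = eval (A *ᵥ x) φ := by
  induction φ using MvPolynomial.induction_on with
  | C a => simp [linearSubst]
  | add φ ψ hφ hψ => simp only [map_add, hφ, hψ]
  | mul_X φ i hφ =>
    rw [map_mul, eval_mul, hφ, eval_mul]
    simp [linearSubst, Matrix.mulVec, dotProduct]

theorem linearSubst_comp (A B : Matrix ι ι R) :
    (linearSubst A).comp (linearSubst B) = linearSubst (B * A) := by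
  refine algHom_ext fun i => ?_
  simp only [AlgHom.comp_apply, linearSubst, aeval_X, map_sum, map_mul, aeval_C,
    Matrix.mul_apply, Finset.sum_mul, Finset.mul_sum, algebraMap_eq]
  rw [Finset.sum_comm]
  exact Finset.sum_congr rfl fun j _ => Finset.sum_congr rfl fun k _ => by ring

variable [DecidableEq ι]

theorem linearSubst_one : linearSubst (1 : Matrix ι ι R) = AlgHom.id R _ :=
  algHom_ext fun i => by simp [linearSubst, Matrix.one_apply]

theorem iterate_linearSubst (A : Matrix ι ι R) (m : ℕ) :
    (linearSubst A)^[m] = linearSubst (A ^ m) := by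
  induction m with
  | zero => rw [iterate_zero, pow_zero, linearSubst_one]; rfl
  | succ m ih => rw [iterate_succ, ih, pow_succ', ← linearSubst_comp, AlgHom.coe_comp]

noncomputable def linearSubstEquiv (g : GL ι R) : MvPolynomial ι R ≃ₐ[R] MvPolynomial ι R :=
  AlgEquiv.ofAlgHom (linearSubst g) (linearSubst ((g⁻¹ : GL ι R) : Matrix ι ι R))
    (by rw [linearSubst_comp, Units.inv_mul, linearSubst_one])
    (by rw [linearSubst_comp, Units.mul_inv, linearSubst_one])

end LinearSubst

section SemiInvariant

variable {ι : Type*} [Fintype ι] [Field K]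

theorem exists_eval_mulVec_eq_mul_of_associated {A : Matrix ι ι K} {f : MvPolynomial ι K}
    (h : Associated (linearSubst A f) f) : ∃ c : K, ∀ x, eval (A *ᵥ x) f = c * eval x f := by
  obtain ⟨u, hu⟩ := h.symm
  obtain ⟨c, -, hc⟩ := isUnit_iff_eq_C_of_isReduced.1 u.isUnit
  exact ⟨c, fun x => by rw [← eval_linearSubst, ← hu, hc, eval_mul, eval_C, mul_comm]⟩

variable [IsAlgClosed K]

theorem linearSubst_dvd_of_prime_dvd {A : Matrix ι ι K} {f r : MvPolynomial ι K}
    (hstab : ∀ x, eval (A *ᵥ x) f = 0 → eval x f = 0) (hr : Prime (linearSubst A r))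
    (hrf : r ∣ f) : linearSubst A r ∣ f := by
  obtain ⟨w, rfl⟩ := hrf
  refine hr.dvd_of_forall_eval_eq_zero fun x hx => hstab x ?_
  rw [eval_mul, ← eval_linearSubst, hx, zero_mul]

theorem associated_linearSubst_self [DecidableEq ι] {p k : ℕ} (hp : p.Prime) {g : GL ι K}
    (hg : g ^ p ^ k = 1) {f : MvPolynomial ι K} (hf : f ≠ 0) (hdeg : f.totalDegree < p)
    (hstab : ∀ x, eval ((g : Matrix ι ι K) *ᵥ x) f = 0 → eval x f = 0) :
    Associated (linearSubst g f) f := by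
  refine associated_apply_of_forall_prime_dvd (linearSubstEquiv g) fun q hq hqf => ?_
  refine associated_apply_of_iterate_eq (linearSubstEquiv g) hp (k := k) ?_ hq hqf
    (fun r hr hrf => linearSubst_dvd_of_prime_dvd hstab
      ((MulEquiv.prime_iff (linearSubstEquiv g)).2 hr) hrf)
    fun s hs => (card_le_totalDegree_of_forall_prime_dvd hf hs).trans_lt hdeg
  change (linearSubst (g : Matrix ι ι K))^[p ^ k] q = q
  rw [iterate_linearSubst, ← Units.val_pow_eq_pow_val, hg, Units.val_one, linearSubst_one]
  rfl

end SemiInvariant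

end MvPolynomial

section CommonEigenvectors

variable {ι K : Type*} [Fintype ι] [DecidableEq ι] [Field K]

theorem span_setOf_forall_mulVec_eq_smul_eq_top [IsAlgClosed K] [CharZero K]
    {G : Subgroup (GL ι K)} [Finite G] (hab : ∀ a b : G, a * b = b * a) :
    Submodule.span K {v : ι → K | ∀ g ∈ G, ∃ c : K, (g : Matrix ι ι K) *ᵥ v = c • v} = ⊤ := by
  let φ : G →* Module.End K (ι → K) :=
    (Matrix.toLinAlgEquiv' : Matrix ι ι K ≃ₐ[K] _).toMonoidHom.comp
      ((Units.coeHom _).comp G.subtype)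
  have h := Module.End.span_setOf_forall_apply_eq_smul_eq_top (T := φ)
    (fun a b _ => (show Commute a b from hab a b).map φ)
    (fun g => Module.End.isSemisimple_of_isOfFinOrder (φ.isOfFinOrder (isOfFinOrder_of_finite g)))
  exact eq_top_iff.2 (h.symm.le.trans (Submodule.span_mono fun v hv g hg => hv ⟨g, hg⟩))

theorem exists_forall_mulVec_eq_smul_of_eval_ne_zero {A : Matrix ι ι K} {N d : ℕ}
    (hAN : A ^ N = 1) (hdN : d.Coprime N) {S : Set (ι → K)} (hS : Submodule.span K S = ⊤)
    (hAS : ∀ v ∈ S, ∃ c : K, A *ᵥ v = c • v) {f : MvPolynomial ι K} (hf : f.IsHomogeneous d)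
    (hfS : ∀ v ∈ S, v ≠ 0 → eval v f ≠ 0) {c : K} (hfA : ∀ v, eval (A *ᵥ v) f = c * eval v f) :
    ∃ a : K, ∀ v, A *ᵥ v = a • v := by
  refine Module.End.exists_forall_apply_eq_smul (T := Matrix.toLin' A) hS
    (P := fun a => a ^ N = 1 ∧ a ^ d = c)
    (fun a b ha hb => eq_of_pow_eq_pow_of_coprime hdN ha.1 hb.1 (ha.2.trans hb.2.symm))
    fun v hvS hv => ?_
  obtain ⟨a, ha⟩ := hAS v hvS
  refine ⟨a, ⟨Module.End.pow_eq_one_of_apply_eq_smul (T := Matrix.toLin' A)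
    (by rw [← Matrix.toLin'_pow, hAN, Matrix.toLin'_one]; rfl) hv ha, ?_⟩, ha⟩
  have := hfA v
  rw [ha, hf.eval_smul] at this
  exact mul_right_cancel₀ (hfS v hvS hv) this

end CommonEigenvectors

namespace Projectivization

theorem eval_mk_rep_eq_zero_iff {σ K : Type*} [Field K] {f : MvPolynomial σ K} {d : ℕ}
    (hf : f.IsHomogeneous d) {v : σ → K} (hv : v ≠ 0) :
    eval (mk K v hv).rep f = 0 ↔ eval v f = 0 := by
  obtain ⟨a, ha⟩ := exists_smul_eq_mk_rep K v hv
  rw [← ha, Units.smul_def, hf.eval_smul, mul_eq_zero, or_iff_right (pow_ne_zero _ a.ne_zero)]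

variable {n : ℕ}

theorem glAct_mk_eq_self {g : GL (Fin n) ℂ} {v : Fin n → ℂ} (hv : v ≠ 0) {c : ℂ}
    (h : (g : Matrix (Fin n) (Fin n) ℂ) *ᵥ v = c • v) : glAct g (mk ℂ v hv) = mk ℂ v hv := by
  rw [glAct, map_mk, mk_eq_mk_iff']
  exact ⟨c, h.symm⟩

theorem eval_mulVec_eq_zero_of_mapsTo_glAct {f : MvPolynomial (Fin n) ℂ} {d : ℕ}
    (hf : f.IsHomogeneous d) {g : GL (Fin n) ℂ}
    (hg : Set.MapsTo (glAct g) {x | eval x.rep f = 0} {x | eval x.rep f = 0})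
    {v : Fin n → ℂ} (hv : eval v f = 0) : eval ((g : Matrix (Fin n) (Fin n) ℂ) *ᵥ v) f = 0 := by
  by_cases hv0 : v = 0
  · rwa [hv0, Matrix.mulVec_zero, ← hv0]
  have := hg ((eval_mk_rep_eq_zero_iff hf hv0).2 hv)
  rwa [Set.mem_ofPred_eq, glAct, map_mk, eval_mk_rep_eq_zero_iff hf] at this

end Projectivization

open Projectivization

/-- Let `V` be a finite-dimensional complex vector space and `G ⊆ GL(V)` a finite abelian
`p`-group. Suppose `G` preserves a hypersurface `R ⊂ P(V)` of degree less than `p` (the zero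
locus of a nonzero homogeneous polynomial `f` of degree `d`, `1 ≤ d < p`). Then `G` has a
fixed point on `R`. -/
theorem stmt9 (p n : ℕ) (hp : p.Prime) (hn : 2 ≤ n)
    (G : Subgroup (GL (Fin n) ℂ)) [Finite G] (hG : IsPGroup p G)
    (hab : ∀ a b : G, a * b = b * a)
    (d : ℕ) (hd1 : 1 ≤ d) (hdp : d < p)
    (f : MvPolynomial (Fin n) ℂ) (hf0 : f ≠ 0) (hfh : f.IsHomogeneous d)
    (R : Set (Projectivization ℂ (Fin n → ℂ)))
    (hR : R = {x | MvPolynomial.eval x.rep f = 0})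
    (hstab : ∀ g ∈ G, ∀ x ∈ R, glAct g x ∈ R) :
    ∃ x ∈ R, ∀ g ∈ G, glAct g x = x := by
  subst hR
  by_cases hzero : ∃ v ≠ 0, eval v f = 0 ∧ ∀ g ∈ G, ∃ c : ℂ, (g : Matrix _ _ ℂ) *ᵥ v = c • v
  · obtain ⟨v, hv, hfv, hvG⟩ := hzero
    exact ⟨_, (eval_mk_rep_eq_zero_iff hfh hv).2 hfv,
      fun g hg => glAct_mk_eq_self hv (hvG g hg).choose_spec⟩
  obtain ⟨v, hv, hfv⟩ := exists_ne_zero_eval_eq_zero_of_totalDegree_pos (f := f)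
    (i := ⟨0, by omega⟩) (j := ⟨1, by omega⟩) (Fin.ne_of_val_ne zero_ne_one)
    (by rw [hfh.totalDegree hf0]; omega)
  refine ⟨_, (eval_mk_rep_eq_zero_iff hfh hv).2 hfv, fun g hg => ?_⟩
  obtain ⟨k, hk⟩ := hG ⟨g, hg⟩
  have hgk : g ^ p ^ k = 1 := by simpa using congrArg Subtype.val hk
  have hpull (x : Fin n → ℂ) (hx : eval ((g : Matrix _ _ ℂ) *ᵥ x) f = 0) : eval x f = 0 := by
    simpa using eval_mulVec_eq_zero_of_mapsTo_glAct hfh (hstab _ (inv_mem hg)) hx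
  have hcop : d.Coprime (p ^ k) :=
    .pow_right k (.symm <| hp.coprime_iff_not_dvd.2 (Nat.not_dvd_of_pos_of_lt hd1 hdp))
  obtain ⟨c, hc⟩ := exists_eval_mulVec_eq_mul_of_associated
    (associated_linearSubst_self hp hgk hf0 (hfh.totalDegree hf0 ▸ hdp) hpull)
  obtain ⟨a, ha⟩ := exists_forall_mulVec_eq_smul_of_eval_ne_zero
    (by rw [← Units.val_pow_eq_pow_val, hgk, Units.val_one]) hcop
    (span_setOf_forall_mulVec_eq_smul_eq_top hab) (fun v hv => hv g hg) hfh
    (fun v hvS hv0 hfv => hzero ⟨v, hv0, hfv, hvS⟩) hc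
  exact glAct_mk_eq_self hv (ha v)
end
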